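/- Let f : ℝ^n → ℝ be a convex function and suppose there exists M ≥ 0 such that |f(z)| ≤ M(1 + ‖z‖) for all z ∈ ℝ^n. Then f is globally Lipschitz continuous with Lipschitz constant at most M, i.e., |f(x) − f(y)| ≤ M‖x − y‖ for all x, y ∈ ℝ^n. -/

import Mathlib

/-!
Restrict `f` to the line through `y` and `x`. By convexity the slope of `f` on `[y, x]` is at
most its slope on `[x, x + t (x - y)]`, and the growth bound makes the latter at most
`M ‖x - y‖ + O(1/t)`. Letting `t → ∞` gives `f x - f y ≤ M ‖x - y‖`.
-/

open Filter Topology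

theorem ConvexOn.slope_le_of_eventually_le_add_mul {g : ℝ → ℝ} (hg : ConvexOn ℝ Set.univ g)
    {a b C K : ℝ} (hab : a < b) (hgrowth : ∀ᶠ s in atTop, g s ≤ C + K * s) :
    (g b - g a) / (b - a) ≤ K := by
  have hlim : Tendsto (fun s => K + (C + K * b - g b) / (s - b)) atTop (𝓝 K) := by
    have hden : Tendsto (fun s => s - b) atTop atTop :=
      tendsto_atTop_add_const_right _ (-b) tendsto_id
    simpa using tendsto_const_nhds.add (hden.const_div_atTop (C + K * b - g b))
  refine ge_of_tendsto hlim ?_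
  filter_upwards [hgrowth, eventually_gt_atTop b] with s hs hbs
  calc (g b - g a) / (b - a)
      ≤ (g s - g b) / (s - b) := hg.slope_mono_adjacent trivial trivial hab hbs
    _ ≤ (C + K * s - g b) / (s - b) := by gcongr
    _ = K + (C + K * b - g b) / (s - b) := by field_simp; ring

theorem mul_norm_add_smul_le {E : Type*} [SeminormedAddCommGroup E] [NormedSpace ℝ E]
    (M : ℝ) (y v : E) {s : ℝ} (hs : 0 ≤ s) :
    M * ‖y + s • v‖ ≤ |M| * ‖y‖ + M * s * ‖v‖ := by
  have hdev : M * (‖y + s • v‖ - ‖s • v‖) ≤ |M| * ‖y‖ :=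
    calc M * (‖y + s • v‖ - ‖s • v‖)
        ≤ |M| * |‖y + s • v‖ - ‖s • v‖| := by rw [← abs_mul]; exact le_abs_self _
      _ ≤ |M| * ‖y‖ := by
        gcongr; simpa using abs_norm_sub_norm_le (y + s • v) (s • v)
  rw [norm_smul, Real.norm_of_nonneg hs] at hdev
  linarith

theorem ConvexOn.sub_le_mul_norm_sub_of_le_add_mul_norm {E : Type*} [SeminormedAddCommGroup E]
    [NormedSpace ℝ E] {f : E → ℝ} (hf : ConvexOn ℝ Set.univ f) {C M : ℝ}
    (hgrowth : ∀ z, f z ≤ C + M * ‖z‖) (x y : E) :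
    f x - f y ≤ M * ‖x - y‖ := by
  have hline : ConvexOn ℝ Set.univ (f ∘ AffineMap.lineMap y x) :=
    hf.comp_affineMap (AffineMap.lineMap y x)
  have hline_growth : ∀ᶠ s in atTop,
      (f ∘ AffineMap.lineMap y x) s ≤ (C + |M| * ‖y‖) + M * ‖x - y‖ * s := by
    filter_upwards [eventually_ge_atTop 0] with s hs
    have := mul_norm_add_smul_le M y (x - y) hs
    simp only [Function.comp_apply, AffineMap.lineMap_apply_module', add_comm _ y]
    linarith [hgrowth (y + s • (x - y))]
  simpa using hline.slope_le_of_eventually_le_add_mul zero_lt_one hline_growth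

theorem convex_linear_growth_lipschitz_general
    {n : ℕ} (f : EuclideanSpace ℝ (Fin n) → ℝ) (M : ℝ)
    (hconv : ConvexOn ℝ Set.univ f)
    (hgrowth : ∀ z, |f z| ≤ M * (1 + ‖z‖)) :
    ∀ x y : EuclideanSpace ℝ (Fin n), |f x - f y| ≤ M * ‖x - y‖ := by
  have hupper : ∀ z, f z ≤ M + M * ‖z‖ := fun z => by
    linarith [le_abs_self (f z), hgrowth z]
  intro x y
  rw [abs_sub_le_iff]
  exact ⟨hconv.sub_le_mul_norm_sub_of_le_add_mul_norm hupper x y,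
    norm_sub_rev x y ▸ hconv.sub_le_mul_norm_sub_of_le_add_mul_norm hupper y x⟩

/-- A convex function on ℝ^n with linear growth |f(z)| ≤ M(1 + ‖z‖) is
globally Lipschitz with constant at most M. -/
theorem convex_linear_growth_lipschitz
    {n : ℕ} (f : EuclideanSpace ℝ (Fin n) → ℝ) (M : ℝ) (hM : 0 ≤ M)
    (hconv : ConvexOn ℝ Set.univ f)
    (hgrowth : ∀ z, |f z| ≤ M * (1 + ‖z‖)) :
    ∀ x y : EuclideanSpace ℝ (Fin n), |f x - f y| ≤ M * ‖x - y‖ :=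
  convex_linear_growth_lipschitz_general f M hconv hgrowth
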